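/- For every Farey triple q̄ = {p, q, r}, the three mutated triples μ_p(q̄), μ_q(q̄), μ_r(q̄) are pairwise distinct and each is distinct from q̄. Consequently, in the exchange graph whose vertices are the Farey triples and whose edges join a Farey triple to each of its mutations, every vertex has exactly three neighbours. -/

import Mathlib

/-- `ℚ∞ = ℚ ∪ {∞}`, ordered with `∞ = ⊤` as the greatest element. -/
abbrev QInf : Type := WithTop ℚ

/-- The numerator `d(q)` of the reduced representation `q = d(q)/r(q)`; `d(∞) = 1`. -/
def fnum : QInf → ℤ := WithTop.recTopCoe 1 (fun q => q.num)

/-- The denominator `r(q)` of the reduced representation `q = d(q)/r(q)`; `r(∞) = 0`. -/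
def fden : QInf → ℤ := WithTop.recTopCoe 0 (fun q => (q.den : ℤ))

/-- The element of `ℚ∞` represented by the fraction `a / b`: it is `∞` if `b = 0`,
and otherwise the rational number `a / b` (normalized so that the denominator is
positive and the fraction is in lowest terms). -/
def fmk (a b : ℤ) : QInf := if b = 0 then (⊤ : QInf) else (((a : ℚ) / (b : ℚ)) : ℚ)

/-- The Farey distance `Δ(p,q) = |d(p)r(q) - d(q)r(p)|`. -/
def fdist (p q : QInf) : ℤ := |fnum p * fden q - fnum q * fden p|

/-- `p` and `q` are Farey neighbours if `Δ(p,q) = 1`. -/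
def FareyNbr (p q : QInf) : Prop := fdist p q = 1

/-- The Farey sum `p ⊕ q = (d(p) + d(q)) / (r(p) + r(q))`. -/
def fsum (p q : QInf) : QInf := fmk (fnum p + fnum q) (fden p + fden q)

/-- The Farey difference `p ⊖ q = (d(p) - d(q)) / (r(p) - r(q))`. -/
def fdiff (p q : QInf) : QInf := fmk (fnum p - fnum q) (fden p - fden q)

/-- A Farey triple: a three-element subset of `ℚ∞` whose elements are pairwise
Farey neighbours. -/
def IsFareyTriple (s : Set QInf) : Prop := s.ncard = 3 ∧ s.Pairwise FareyNbr

/-- The element replacing `p` in the mutation of the Farey triple `{p, q, r}` in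
direction `p`: it is `q ⊖ r` if `p` lies strictly between `q` and `r`, and `q ⊕ r`
otherwise. -/
def fareyMutEl (p q r : QInf) : QInf :=
  if (q < p ∧ p < r) ∨ (r < p ∧ p < q) then fdiff q r else fsum q r

/-- The mutation of the Farey triple `{p, q, r}` in direction `p`. -/
def fareyMut (p q r : QInf) : Set QInf := {fareyMutEl p q r, q, r}

/-- The complexity `c(q) = |d(q)| + r(q) + |d(q) - r(q)|`. -/
def complexity (x : QInf) : ℤ := |fnum x| + fden x + |fnum x - fden x|

/-- `t` is obtained from `s` by a single mutation of Farey triples. -/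
def IsMutationOf (s t : Set QInf) : Prop :=
  ∃ a b c : QInf, a ≠ b ∧ a ≠ c ∧ b ≠ c ∧ s = {a, b, c} ∧ t = fareyMut a b c


/-! Write `v x = (d(x), r(x)) ∈ ℤ²` and `fdet x y = det (v x, v y)`, so Farey neighbours are
unimodular pairs. For neighbours `q, r`, Cramer's rule in the basis `v q, v r` shows that the
common neighbours of `q` and `r` are the points with `v x = ±(v q + t • v r)`, `t = ±1`, namely
`q ⊕ r` and `q ⊖ r`. Since denominators are nonnegative, `x` lies strictly between `q` and `r`
iff `fdet q x * fdet x r > 0`, and for these two points that product is `t`. So `q ⊕ r` lies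
between `q` and `r` and `q ⊖ r` does not, and the mutation in direction `p` replaces `p` by the
other common neighbour of `q, r`: it changes the sign of `t`, never fixes `p`, and is an
involution. Then `p ∉ μ_p(q̄)` while `p ∈ μ_q(q̄), μ_r(q̄)` separates the three mutations, and by
involutivity a Farey triple that mutates into `q̄` is one of them. -/

@[simp] lemma fnum_top : fnum ⊤ = 1 := rfl
@[simp] lemma fden_top : fden ⊤ = 0 := rfl
@[simp] lemma fnum_coe (x : ℚ) : fnum x = x.num := rfl
@[simp] lemma fden_coe (x : ℚ) : fden x = x.den := rfl

lemma fmk_fnum_fden (x : QInf) : fmk (fnum x) (fden x) = x := by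
  cases x using WithTop.recTopCoe <;> simp [fmk, Rat.num_div_den]

lemma fmk_neg (a b : ℤ) : fmk (-a) (-b) = fmk a b := by
  simp only [fmk, neg_eq_zero, Int.cast_neg, neg_div_neg_eq]

lemma fmk_mul_of_sq_eq_one {u : ℤ} (hu : u ^ 2 = 1) (a b : ℤ) :
    fmk (u * a) (u * b) = fmk a b := by
  rcases sq_eq_one_iff.mp hu with rfl | rfl
  · simp
  · simp [fmk_neg]

lemma fnum_fden_fmk_of_pos {a b : ℤ} (h : IsCoprime a b) (hb : 0 < b) :
    fnum (fmk a b) = a ∧ fden (fmk a b) = b := by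
  have hab : Nat.Coprime a.natAbs b.natAbs := Int.isCoprime_iff_gcd_eq_one.mp h
  simp [fmk, hb.ne', Rat.num_div_eq_of_coprime hb hab, Rat.den_div_eq_of_coprime hb hab]

lemma exists_fnum_fden_fmk {a b : ℤ} (h : IsCoprime a b) :
    ∃ u : ℤ, u ^ 2 = 1 ∧ fnum (fmk a b) = u * a ∧ fden (fmk a b) = u * b := by
  rcases lt_trichotomy b 0 with hb | rfl | hb
  · obtain ⟨hn, hd⟩ := fnum_fden_fmk_of_pos h.neg_neg (neg_pos.mpr hb)
    exact ⟨-1, by norm_num, by simpa [fmk_neg] using hn, by simpa [fmk_neg] using hd⟩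
  · rcases Int.isUnit_iff.mp (isCoprime_zero_right.mp h) with rfl | rfl
    · exact ⟨1, by norm_num, by simp [fmk], by simp [fmk]⟩
    · exact ⟨-1, by norm_num, by simp [fmk], by simp [fmk]⟩
  · exact ⟨1, one_pow 2, by simpa using fnum_fden_fmk_of_pos h hb⟩

def fdet (x y : QInf) : ℤ := fnum x * fden y - fnum y * fden x

lemma fareyNbr_iff_fdet_sq {x y : QInf} : FareyNbr x y ↔ fdet x y ^ 2 = 1 := by
  rw [FareyNbr, fdist, ← sq_abs, pow_eq_one_iff_of_nonneg (abs_nonneg _) two_ne_zero, fdet]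

lemma fdet_swap (x y : QInf) : fdet y x = -fdet x y := by
  unfold fdet; ring

lemma FareyNbr.symm {x y : QInf} (h : FareyNbr x y) : FareyNbr y x := by
  rwa [fareyNbr_iff_fdet_sq, fdet_swap, neg_sq, ← fareyNbr_iff_fdet_sq]

lemma FareyNbr.ne {x y : QInf} (h : FareyNbr x y) : x ≠ y := by
  rintro rfl
  simp [fareyNbr_iff_fdet_sq, fdet] at h

lemma lt_iff_fdet_neg (x y : QInf) : x < y ↔ fdet x y < 0 := by
  rw [fdet, sub_neg]
  cases x using WithTop.recTopCoe <;> cases y using WithTop.recTopCoe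
  · simp
  · simp
  · simpa using (Rat.den_pos _)
  · simp [Rat.lt_iff]

lemma strictBetween_iff_fdet {q x r : QInf} :
    (q < x ∧ x < r) ∨ (r < x ∧ x < q) ↔ 0 < fdet q x * fdet x r := by
  rw [lt_iff_fdet_neg, lt_iff_fdet_neg, lt_iff_fdet_neg, lt_iff_fdet_neg, fdet_swap q x,
    fdet_swap x r, neg_neg_iff_pos, neg_neg_iff_pos]
  constructor
  · rintro (⟨h1, h2⟩ | ⟨h1, h2⟩)
    · exact mul_pos_of_neg_of_neg h1 h2
    · exact mul_pos h2 h1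
  · intro h
    rcases pos_and_pos_or_neg_and_neg_of_mul_pos h with ⟨h1, h2⟩ | ⟨h1, h2⟩
    · exact Or.inr ⟨h2, h1⟩
    · exact Or.inl ⟨h1, h2⟩

def fcomb (q r : QInf) (t : ℤ) : QInf := fmk (fnum q + t * fnum r) (fden q + t * fden r)

lemma fsum_eq_fcomb (q r : QInf) : fsum q r = fcomb q r 1 := by
  simp only [fsum, fcomb, one_mul]

lemma fdiff_eq_fcomb (q r : QInf) : fdiff q r = fcomb q r (-1) := by
  simp only [fdiff, fcomb, neg_one_mul, ← sub_eq_add_neg]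

lemma fdet_fcomb {q r : QInf} (h : FareyNbr q r) (t : ℤ) :
    ∃ u : ℤ, u ^ 2 = 1 ∧ fdet q (fcomb q r t) = u * t * fdet q r ∧
      fdet (fcomb q r t) r = u * fdet q r := by
  rw [fareyNbr_iff_fdet_sq] at h
  have hcop : IsCoprime (fnum q + t * fnum r) (fden q + t * fden r) :=
    ⟨fdet q r * fden r, -(fdet q r * fnum r), by unfold fdet at h ⊢; linear_combination h⟩
  obtain ⟨u, hu, hn, hd⟩ := exists_fnum_fden_fmk hcop
  refine ⟨u, hu, ?_, ?_⟩ <;> simp only [fdet, fcomb, hn, hd] <;> ring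

lemma fareyNbr_fcomb_left {q r : QInf} (h : FareyNbr q r) {t : ℤ} (ht : t ^ 2 = 1) :
    FareyNbr (fcomb q r t) q := by
  obtain ⟨u, hu, hq, -⟩ := fdet_fcomb h t
  refine FareyNbr.symm ?_
  rw [fareyNbr_iff_fdet_sq] at h ⊢
  rw [hq]
  linear_combination t ^ 2 * fdet q r ^ 2 * hu + fdet q r ^ 2 * ht + h

lemma fareyNbr_fcomb_right {q r : QInf} (h : FareyNbr q r) (t : ℤ) :
    FareyNbr (fcomb q r t) r := by
  obtain ⟨u, hu, -, hr⟩ := fdet_fcomb h t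
  rw [fareyNbr_iff_fdet_sq] at h ⊢
  rw [hr]
  linear_combination fdet q r ^ 2 * hu + h

lemma strictBetween_fcomb_iff {q r : QInf} (h : FareyNbr q r) (t : ℤ) :
    (q < fcomb q r t ∧ fcomb q r t < r) ∨ (r < fcomb q r t ∧ fcomb q r t < q) ↔ 0 < t := by
  obtain ⟨u, hu, hq, hr⟩ := fdet_fcomb h t
  rw [fareyNbr_iff_fdet_sq] at h
  have : fdet q (fcomb q r t) * fdet (fcomb q r t) r = t := by
    rw [hq, hr]
    linear_combination t * fdet q r ^ 2 * hu + t * h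
  rw [strictBetween_iff_fdet, this]

lemma eq_fcomb_of_fareyNbr {x q r : QInf} (hxq : FareyNbr x q) (hxr : FareyNbr x r)
    (hqr : FareyNbr q r) : ∃ t : ℤ, t ^ 2 = 1 ∧ x = fcomb q r t := by
  have hqx := fareyNbr_iff_fdet_sq.mp hxq.symm
  rw [fareyNbr_iff_fdet_sq] at hxr hqr
  -- Cramer's rule for the unimodular basis `(d(q), r(q)), (d(r), r(r))` of `ℤ²`
  have hnum : fdet q r * fnum x = fdet x r * fnum q + fdet q x * fnum r := by unfold fdet; ring
  have hden : fdet q r * fden x = fdet x r * fden q + fdet q x * fden r := by unfold fdet; ring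
  set u := fdet q r * fdet x r
  set t := fdet x r * fdet q x
  refine ⟨t, by linear_combination fdet q x ^ 2 * hxr + hqx, ?_⟩
  calc x = fmk (fnum x) (fden x) := (fmk_fnum_fden x).symm
    _ = fmk (u * (fnum q + t * fnum r)) (u * (fden q + t * fden r)) := by
      congr 1
      · linear_combination fdet q r * hnum - fnum x * hqr - fdet q r * fdet q x * fnum r * hxr
      · linear_combination fdet q r * hden - fden x * hqr - fdet q r * fdet q x * fden r * hxr
    _ = fcomb q r t := fmk_mul_of_sq_eq_one (by linear_combination fdet x r ^ 2 * hqr + hxr) _ _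

lemma fcomb_neg_ne {q r : QInf} (h : FareyNbr q r) {t : ℤ} (ht : t ^ 2 = 1) :
    fcomb q r (-t) ≠ fcomb q r t := by
  intro heq
  have := strictBetween_fcomb_iff h t
  rw [← heq, strictBetween_fcomb_iff h (-t)] at this
  rcases sq_eq_one_iff.mp ht with rfl | rfl <;> norm_num at this

lemma fareyMutEl_fcomb {q r : QInf} (h : FareyNbr q r) {t : ℤ} (ht : t ^ 2 = 1) :
    fareyMutEl (fcomb q r t) q r = fcomb q r (-t) := by
  simp only [fareyMutEl, strictBetween_fcomb_iff h]
  rcases sq_eq_one_iff.mp ht with rfl | rfl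
  · simp [fdiff_eq_fcomb]
  · simp [fsum_eq_fcomb]

lemma fsum_comm (q r : QInf) : fsum q r = fsum r q := by
  simp only [fsum, add_comm]

lemma fdiff_comm (q r : QInf) : fdiff q r = fdiff r q := by
  rw [fdiff, fdiff, ← fmk_neg, neg_sub, neg_sub]

lemma fareyMutEl_comm (p q r : QInf) : fareyMutEl p q r = fareyMutEl p r q := by
  rw [fareyMutEl, fareyMutEl, fsum_comm, fdiff_comm]
  exact if_congr or_comm rfl rfl

lemma fareyMut_comm (p q r : QInf) : fareyMut p q r = fareyMut p r q := by
  rw [fareyMut, fareyMut, fareyMutEl_comm, Set.pair_comm]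

section FareyTriple

variable {p q r : QInf}

lemma fareyMutEl_ne (h1 : FareyNbr p q) (h2 : FareyNbr p r) (h3 : FareyNbr q r) :
    fareyMutEl p q r ≠ p := by
  obtain ⟨t, ht, rfl⟩ := eq_fcomb_of_fareyNbr h1 h2 h3
  rw [fareyMutEl_fcomb h3 ht]
  exact fcomb_neg_ne h3 ht

lemma fareyNbr_fareyMutEl_left (h1 : FareyNbr p q) (h2 : FareyNbr p r) (h3 : FareyNbr q r) :
    FareyNbr (fareyMutEl p q r) q := by
  obtain ⟨t, ht, rfl⟩ := eq_fcomb_of_fareyNbr h1 h2 h3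
  rw [fareyMutEl_fcomb h3 ht]
  exact fareyNbr_fcomb_left h3 (by rwa [neg_sq])

lemma fareyNbr_fareyMutEl_right (h1 : FareyNbr p q) (h2 : FareyNbr p r) (h3 : FareyNbr q r) :
    FareyNbr (fareyMutEl p q r) r := by
  rw [fareyMutEl_comm]
  exact fareyNbr_fareyMutEl_left h2 h1 h3.symm

lemma fareyMutEl_fareyMutEl (h1 : FareyNbr p q) (h2 : FareyNbr p r) (h3 : FareyNbr q r) :
    fareyMutEl (fareyMutEl p q r) q r = p := by
  obtain ⟨t, ht, rfl⟩ := eq_fcomb_of_fareyNbr h1 h2 h3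
  rw [fareyMutEl_fcomb h3 ht, fareyMutEl_fcomb h3 (by rwa [neg_sq]), neg_neg]

end FareyTriple

section ExchangeGraph

variable {p q r : QInf}

lemma notMem_fareyMut (h1 : FareyNbr p q) (h2 : FareyNbr p r) (h3 : FareyNbr q r) :
    p ∉ fareyMut p q r := by
  simp only [fareyMut, Set.mem_insert_iff, Set.mem_singleton_iff, not_or]
  exact ⟨(fareyMutEl_ne h1 h2 h3).symm, h1.ne, h2.ne⟩

lemma fareyMut_ne_self (h1 : FareyNbr p q) (h2 : FareyNbr p r) (h3 : FareyNbr q r) :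
    fareyMut p q r ≠ {p, q, r} :=
  (ne_of_mem_of_not_mem' (Set.mem_insert p _) (notMem_fareyMut h1 h2 h3)).symm

lemma isFareyTriple_of_fareyNbr {x y z : QInf} (hxy : FareyNbr x y) (hxz : FareyNbr x z)
    (hyz : FareyNbr y z) : IsFareyTriple {x, y, z} := by
  refine ⟨Set.ncard_eq_three.mpr ⟨x, y, z, hxy.ne, hxz.ne, hyz.ne, rfl⟩, ?_⟩
  simp [Set.pairwise_insert, hxy, hxz, hyz, hxy.symm, hxz.symm, hyz.symm]

lemma isFareyTriple_fareyMut (h1 : FareyNbr p q) (h2 : FareyNbr p r) (h3 : FareyNbr q r) :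
    IsFareyTriple (fareyMut p q r) :=
  isFareyTriple_of_fareyNbr (fareyNbr_fareyMutEl_left h1 h2 h3)
    (fareyNbr_fareyMutEl_right h1 h2 h3) h3

lemma fareyMut_fareyMutEl (h1 : FareyNbr p q) (h2 : FareyNbr p r) (h3 : FareyNbr q r) :
    fareyMut (fareyMutEl p q r) q r = {p, q, r} := by
  rw [fareyMut, fareyMutEl_fareyMutEl h1 h2 h3]

lemma fareyMut_eq_of_insert_eq {a b c : QInf} (hab : a ≠ b) (hac : a ≠ c) (hpq : p ≠ q)
    (hpr : p ≠ r) (h : ({a, b, c} : Set QInf) = {p, q, r}) (hap : a = p) :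
    fareyMut a b c = fareyMut p q r := by
  subst hap
  have hbc : ({b, c} : Set QInf) = {q, r} := by
    rw [← Set.insert_sdiff_self_of_notMem (a := a) (s := {b, c}) (by simp [hab, hac]), h,
      Set.insert_sdiff_self_of_notMem (by simp [hpq, hpr])]
  rcases Set.pair_eq_pair_iff.mp hbc with ⟨rfl, rfl⟩ | ⟨rfl, rfl⟩
  · rfl
  · exact fareyMut_comm _ _ _

lemma fareyMut_cases_of_insert_eq {a b c : QInf} (hab : a ≠ b) (hac : a ≠ c) (hpq : p ≠ q)
    (hpr : p ≠ r) (hqr : q ≠ r) (h : ({a, b, c} : Set QInf) = {p, q, r}) :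
    fareyMut a b c = fareyMut p q r ∨ fareyMut a b c = fareyMut q p r ∨
      fareyMut a b c = fareyMut r p q := by
  have ha : a ∈ ({p, q, r} : Set QInf) := h ▸ Set.mem_insert a _
  rcases ha with rfl | rfl | rfl
  · exact Or.inl (fareyMut_eq_of_insert_eq hab hac hpq hpr h rfl)
  · refine Or.inr (Or.inl (fareyMut_eq_of_insert_eq hab hac hpq.symm hqr ?_ rfl))
    rw [h, Set.insert_comm]
  · refine Or.inr (Or.inr (fareyMut_eq_of_insert_eq hab hac hpr.symm hqr.symm ?_ rfl))
    rw [h, Set.pair_comm q, Set.insert_comm p]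

lemma exchange_neighbours_eq (h1 : FareyNbr p q) (h2 : FareyNbr p r) (h3 : FareyNbr q r) :
    {t : Set QInf | IsFareyTriple t ∧ t ≠ {p, q, r} ∧
        (IsMutationOf ({p, q, r} : Set QInf) t ∨ IsMutationOf t ({p, q, r} : Set QInf))} =
      {fareyMut p q r, fareyMut q p r, fareyMut r p q} := by
  ext t
  constructor
  · rintro ⟨ht, -, ⟨a, b, c, hab, hac, -, hs, rfl⟩ | ⟨a, b, c, hab, hac, hbc, rfl, hs⟩⟩
    · exact fareyMut_cases_of_insert_eq hab hac h1.ne h2.ne h3.ne hs.symm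
    · have n1 : FareyNbr a b := ht.2 (by simp) (by simp) hab
      have n2 : FareyNbr a c := ht.2 (by simp) (by simp) hac
      have n3 : FareyNbr b c := ht.2 (by simp) (by simp) hbc
      rw [← fareyMut_fareyMutEl n1 n2 n3]
      exact fareyMut_cases_of_insert_eq (fareyNbr_fareyMutEl_left n1 n2 n3).ne
        (fareyNbr_fareyMutEl_right n1 n2 n3).ne h1.ne h2.ne h3.ne hs.symm
  · have hqpr : ({q, p, r} : Set QInf) = {p, q, r} := Set.insert_comm q p {r}
    have hrpq : ({r, p, q} : Set QInf) = {p, q, r} := by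
      rw [Set.insert_comm r p, Set.pair_comm r q]
    rintro (rfl | rfl | rfl)
    · exact ⟨isFareyTriple_fareyMut h1 h2 h3, fareyMut_ne_self h1 h2 h3,
        Or.inl ⟨p, q, r, h1.ne, h2.ne, h3.ne, rfl, rfl⟩⟩
    · exact ⟨isFareyTriple_fareyMut h1.symm h3 h2, hqpr ▸ fareyMut_ne_self h1.symm h3 h2,
        Or.inl ⟨q, p, r, h1.symm.ne, h3.ne, h2.ne, hqpr.symm, rfl⟩⟩
    · exact ⟨isFareyTriple_fareyMut h2.symm h3.symm h1,
        hrpq ▸ fareyMut_ne_self h2.symm h3.symm h1,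
        Or.inl ⟨r, p, q, h2.symm.ne, h3.symm.ne, h1.ne, hrpq.symm, rfl⟩⟩

end ExchangeGraph

theorem fareyTriple_three_neighbours_general (p q r : QInf)
    (h1 : FareyNbr p q) (h2 : FareyNbr p r) (h3 : FareyNbr q r) :
    fareyMut p q r ≠ fareyMut q p r ∧
    fareyMut p q r ≠ fareyMut r p q ∧
    fareyMut q p r ≠ fareyMut r p q ∧
    fareyMut p q r ≠ ({p, q, r} : Set QInf) ∧
    fareyMut q p r ≠ ({p, q, r} : Set QInf) ∧
    fareyMut r p q ≠ ({p, q, r} : Set QInf) ∧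
    {t : Set QInf | IsFareyTriple t ∧ t ≠ {p, q, r} ∧
        (IsMutationOf ({p, q, r} : Set QInf) t ∨
          IsMutationOf t ({p, q, r} : Set QInf))}.ncard = 3 := by
  have hp : p ∉ fareyMut p q r := notMem_fareyMut h1 h2 h3
  have hq : q ∉ fareyMut q p r := notMem_fareyMut h1.symm h3 h2
  have hr : r ∉ fareyMut r p q := notMem_fareyMut h2.symm h3.symm h1
  have hpq : fareyMut p q r ≠ fareyMut q p r :=
    (ne_of_mem_of_not_mem' (by simp [fareyMut]) hp).symm
  have hpr : fareyMut p q r ≠ fareyMut r p q :=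
    (ne_of_mem_of_not_mem' (by simp [fareyMut]) hp).symm
  have hqr : fareyMut q p r ≠ fareyMut r p q :=
    (ne_of_mem_of_not_mem' (by simp [fareyMut]) hq).symm
  refine ⟨hpq, hpr, hqr, (ne_of_mem_of_not_mem' (by simp) hp).symm,
    (ne_of_mem_of_not_mem' (by simp) hq).symm, (ne_of_mem_of_not_mem' (by simp) hr).symm, ?_⟩
  rw [exchange_neighbours_eq h1 h2 h3, Set.ncard_eq_three]
  exact ⟨_, _, _, hpq, hpr, hqr, rfl⟩

/-- For every Farey triple `{p, q, r}`, the three mutated triples are pairwise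
distinct and each is distinct from `{p, q, r}`; consequently, in the exchange graph
of Farey triples (with an edge between a Farey triple and each of its mutations)
every vertex has exactly three neighbours. -/
theorem fareyTriple_three_neighbours (p q r : QInf)
    (hpq : p ≠ q) (hpr : p ≠ r) (hqr : q ≠ r)
    (h1 : FareyNbr p q) (h2 : FareyNbr p r) (h3 : FareyNbr q r) :
    fareyMut p q r ≠ fareyMut q p r ∧
    fareyMut p q r ≠ fareyMut r p q ∧
    fareyMut q p r ≠ fareyMut r p q ∧
    fareyMut p q r ≠ ({p, q, r} : Set QInf) ∧
    fareyMut q p r ≠ ({p, q, r} : Set QInf) ∧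
    fareyMut r p q ≠ ({p, q, r} : Set QInf) ∧
    {t : Set QInf | IsFareyTriple t ∧ t ≠ {p, q, r} ∧
        (IsMutationOf ({p, q, r} : Set QInf) t ∨
          IsMutationOf t ({p, q, r} : Set QInf))}.ncard = 3 :=
  fareyTriple_three_neighbours_general p q r h1 h2 h3
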